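/- Let U ∈ ℝ_max^{n×n} with ρ(U) ≤ 0, let U* = I ⊕ U ⊕ ⋯ ⊕ U^{n−1} with entries u*_{ij}, let g ∈ ℝ_max^n, h ∈ (ℝ ∪ {+∞})^n with U* ⊗ g ≤ h, and let p ∈ ℝ_max^n, q ∈ (ℝ ∪ {+∞})^n. Then the infimum over x ∈ ℝ^n satisfying g ≤ x ≤ h and U ⊗ x ≤ x of the objective f(x) = max( max_{i : p_i ∈ ℝ} (p_i − x_i), max_{i : q_i ∈ ℝ} (x_i − q_i) ) equals θ := max( (1/2)·max_{i,j : q_i ∈ ℝ, u*_{ij} ∈ ℝ, p_j ∈ ℝ} (−q_i + u*_{ij} + p_j), max_{i,j : h_i ∈ ℝ, u*_{ij} ∈ ℝ, p_j ∈ ℝ} (−h_i + u*_{ij} + p_j), max_{i,j : q_i ∈ ℝ, u*_{ij} ∈ ℝ, g_j ∈ ℝ} (−q_i + u*_{ij} + g_j) ), where both sides lie in ℝ ∪ {−∞} and maxima over empty sets are −∞. (In max-plus notation: θ = (q^- ⊗ U* ⊗ p)^{⊗1/2} ⊕ h^- ⊗ U* ⊗ p ⊕ q^- ⊗ U* ⊗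 g.) -/

import Mathlib

/-!
For feasible `x`, `U ⊗ x ≤ x` propagates to `U* ⊗ x ≤ x`, and then each term of `θ` is bounded
by the objective: `-q i + u*_ij + p j ≤ (x i - q i) + (p j - x j) ≤ 2 f(x)`,
`-h i + u*_ij + p j ≤ p j - x j` and `-q i + u*_ij + g j ≤ x i - q i`.

Conversely, for real `t > θ` the vector `x = U* ⊗ (g ⊕ (p - t) ⊕ r)`, with a real constant `r`
small enough, is feasible and has `f(x) ≤ t`. The bounds `x ≤ h` and `x ≤ q + t` are exactly the
three inequalities `θ < t` together with `U* ⊗ g ≤ h`, and `U ⊗ x ≤ x` follows from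
`U ⊗ U* ≤ U*`. The latter is where `ρ(U) ≤ 0` enters: it makes every power `U^m` dominated by
`U*`, since a walk of length `≥ n` repeats a vertex and cutting out the cycle does not decrease
its weight.
-/

/-- Max-plus identity matrix: `0` on the diagonal, `−∞` off it. -/
noncomputable def mpId (n : ℕ) : Fin n → Fin n → EReal := fun i j => if i = j then 0 else ⊥

/-- Max-plus matrix product. -/
noncomputable def mpMul {n : ℕ} (A B : Fin n → Fin n → EReal) : Fin n → Fin n → EReal :=
  fun i j => ⨆ k, A i k + B k j

/-- Max-plus matrix powers, `A^0 = I`. -/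
noncomputable def mpPow {n : ℕ} (A : Fin n → Fin n → EReal) : ℕ → Fin n → Fin n → EReal
  | 0 => mpId n
  | k + 1 => mpMul (mpPow A k) A

/-- Kleene star truncation `A* = I ⊕ A ⊕ ⋯ ⊕ A^{n−1}` (entrywise maximum). -/
noncomputable def mpStar {n : ℕ} (A : Fin n → Fin n → EReal) : Fin n → Fin n → EReal :=
  fun i j => ⨆ k : Fin n, mpPow A (k : ℕ) i j

/-- Maximum cycle mean `ρ(A)`: the supremum, over all closed walks
`f 0, f 1, …, f k = f 0` (`k ≥ 1`), of the mean weight of the walk.  A walk using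
a `−∞` arc has mean `−∞`, so this equals the maximum mean over elementary cycles
of the digraph of finite entries, and it is `−∞` when that digraph is acyclic. -/
noncomputable def rho {n : ℕ} (A : Fin n → Fin n → EReal) : EReal :=
  ⨆ (k : ℕ) (_ : 0 < k) (f : ℕ → Fin n) (_ : f k = f 0),
    (((k : ℝ)⁻¹ : ℝ) : EReal) * ∑ i ∈ Finset.range k, A (f i) (f (i + 1))

namespace EReal

lemma add_iSup_le {ι : Sort*} {a c : EReal} {f : ι → EReal} (h : ∀ i, a + f i ≤ c) :
    a + ⨆ i, f i ≤ c :=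
  add_le_of_forall_lt fun _ ha' _ hb' =>
    let ⟨i, hi⟩ := lt_iSup_iff.1 hb'
    (add_le_add ha'.le hi.le).trans (h i)

lemma iSup_add_le {ι : Sort*} {a c : EReal} {f : ι → EReal} (h : ∀ i, f i + a ≤ c) :
    (⨆ i, f i) + a ≤ c := by
  rw [add_comm]
  exact add_iSup_le fun i => add_comm a (f i) ▸ h i

lemma half_mul_add_self (c : EReal) : (((2 : ℝ)⁻¹ : ℝ) : EReal) * (c + c) = c := by
  induction c with
  | bot => exact coe_mul_bot_of_pos (by norm_num)
  | coe r => norm_cast; ring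
  | top => exact coe_mul_top_of_pos (by norm_num)

lemma le_add_self_of_half_mul_lt {a c : EReal} (h : (((2 : ℝ)⁻¹ : ℝ) : EReal) * a < c) :
    a ≤ c + c := by
  by_contra! hlt
  have := mul_le_mul_of_nonneg_left hlt.le (a := (((2 : ℝ)⁻¹ : ℝ) : EReal)) (by norm_num)
  rw [half_mul_add_self] at this
  exact h.not_ge this

lemma exists_coe_add_le {ι : Type*} [Finite ι] {a c : ι → EReal} (ha : ∀ k, a k ≠ ⊤)
    (hc : ∀ k, c k ≠ ⊥) : ∃ r : ℝ, ∀ k, a k + r ≤ c k := by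
  have hk : ∀ k, ∃ r : ℝ, a k + r ≤ c k := by
    intro k
    by_cases hck : c k = ⊤
    · exact ⟨0, hck ▸ le_top⟩
    lift c k to ℝ using ⟨hck, hc k⟩ with ck
    refine ⟨ck - (a k).toReal, ?_⟩
    calc a k + ↑(ck - (a k).toReal) ≤ ↑(a k).toReal + ↑(ck - (a k).toReal) :=
          add_le_add_left (le_coe_toReal (ha k)) _
      _ = ck := by norm_cast; ring
  choose r hr using hk
  obtain ⟨r₀, hr₀⟩ := Finite.exists_ge r
  exact ⟨r₀, fun k => (add_le_add_right (EReal.coe_le_coe (hr₀ k)) _).trans (hr k)⟩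

lemma add_sub_le_of_le_add {a b c d : EReal} (h : a + b ≤ d + c) : a + (b - c) ≤ d := by
  rw [sub_eq_add_neg, ← add_assoc, ← sub_eq_add_neg]
  exact sub_le_of_le_add h

end EReal

section MaxPlus

variable {n : ℕ} {A : Fin n → Fin n → EReal}

lemma add_mpPow_le_mpPow_succ (k : ℕ) (i j m : Fin n) :
    A i j + mpPow A k j m ≤ mpPow A (k + 1) i m := by
  induction k generalizing m with
  | zero =>
    show A i j + mpId n j m ≤ ⨆ l, mpId n i l + A l m
    rcases eq_or_ne j m with rfl | hjm
    · exact le_iSup_of_le i (by simp [mpId])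
    · simp [mpId, hjm]
  | succ k ih =>
    refine EReal.add_iSup_le fun l => ?_
    calc A i j + (mpPow A k j l + A l m) = (A i j + mpPow A k j l) + A l m := (add_assoc ..).symm
      _ ≤ mpPow A (k + 1) i l + A l m := add_le_add_left (ih l) _
      _ ≤ mpPow A (k + 2) i m := le_iSup (fun l => mpPow A (k + 1) i l + A l m) l

lemma mpPow_ne_top (hA : ∀ i j, A i j ≠ ⊤) (k : ℕ) (i j : Fin n) : mpPow A k i j ≠ ⊤ := by
  induction k generalizing j with
  | zero => unfold mpPow mpId; split_ifs <;> simp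
  | succ k ih => exact iSup_ne_top fun l => EReal.add_ne_top (ih l) (hA l j)

lemma mpStar_ne_top (hA : ∀ i j, A i j ≠ ⊤) (i j : Fin n) : mpStar A i j ≠ ⊤ :=
  iSup_ne_top fun k => mpPow_ne_top hA k i j

lemma zero_le_mpStar_self (i : Fin n) : 0 ≤ mpStar A i i :=
  le_iSup_of_le ⟨0, i.pos⟩ (by simp [mpPow, mpId])

lemma mpPow_add_le_of_add_le {x : Fin n → EReal} (hx : ∀ i j, A i j + x j ≤ x i) (k : ℕ)
    (i j : Fin n) : mpPow A k i j + x j ≤ x i := by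
  induction k generalizing j with
  | zero => unfold mpPow mpId; split_ifs with hij <;> simp [hij]
  | succ k ih =>
    refine EReal.iSup_add_le fun l => ?_
    calc mpPow A k i l + A l j + x j = mpPow A k i l + (A l j + x j) := add_assoc ..
      _ ≤ mpPow A k i l + x l := add_le_add_right (hx l j) _
      _ ≤ x i := ih l

lemma mpStar_add_le_of_add_le {x : Fin n → EReal} (hx : ∀ i j, A i j + x j ≤ x i)
    (i j : Fin n) : mpStar A i j + x j ≤ x i :=
  EReal.iSup_add_le fun k => mpPow_add_le_of_add_le hx k i j

noncomputable def walkWeight (A : Fin n → Fin n → EReal) (m : ℕ) (f : ℕ → Fin n) : EReal :=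
  ∑ t ∈ Finset.range m, A (f t) (f (t + 1))

lemma walkWeight_congr {m : ℕ} {f g : ℕ → Fin n} (h : ∀ t ≤ m, f t = g t) :
    walkWeight A m f = walkWeight A m g :=
  Finset.sum_congr rfl fun t ht => by
    rw [Finset.mem_range] at ht
    rw [h t ht.le, h (t + 1) ht]

lemma walkWeight_succ (m : ℕ) (f : ℕ → Fin n) :
    walkWeight A (m + 1) f = walkWeight A m f + A (f m) (f (m + 1)) :=
  Finset.sum_range_succ _ _

lemma walkWeight_add (a b : ℕ) (f : ℕ → Fin n) :
    walkWeight A (a + b) f = walkWeight A a f + walkWeight A b (fun t => f (a + t)) := by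
  simp only [walkWeight, Finset.sum_range_add, add_assoc]

lemma walkWeight_le_mpPow (m : ℕ) (f : ℕ → Fin n) :
    walkWeight A m f ≤ mpPow A m (f 0) (f m) := by
  induction m with
  | zero => simp [walkWeight, mpPow, mpId]
  | succ m ih =>
    rw [walkWeight_succ]
    exact (add_le_add_left ih _).trans
      (le_iSup (fun l => mpPow A m (f 0) l + A l (f (m + 1))) (f m))

lemma mpPow_eq_iSup_walkWeight (m : ℕ) (i j : Fin n) :
    mpPow A m i j = ⨆ (f : ℕ → Fin n) (_ : f 0 = i ∧ f m = j), walkWeight A m f := by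
  refine le_antisymm ?_ (iSup₂_le fun f ⟨hf0, hfm⟩ => hf0 ▸ hfm ▸ walkWeight_le_mpPow m f)
  induction m generalizing j with
  | zero =>
    show mpId n i j ≤ _
    unfold mpId
    split_ifs with hij
    · exact le_iSup₂_of_le (fun _ => i) ⟨rfl, hij⟩ (by simp [walkWeight])
    · exact bot_le
  | succ m ih =>
    refine iSup_le fun l => ?_
    refine (add_le_add_left (ih l) _).trans (EReal.iSup_add_le fun f => ?_)
    refine EReal.iSup_add_le fun ⟨hf0, hfm⟩ => ?_
    let f' : ℕ → Fin n := fun t => if t ≤ m then f t else j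
    have hf' : ∀ t ≤ m, f t = f' t := fun t ht => (if_pos ht).symm
    refine le_iSup₂_of_le f' ⟨(hf' 0 m.zero_le).symm.trans hf0, if_neg (by omega)⟩ ?_
    rw [walkWeight_succ, ← walkWeight_congr hf', ← hf' m le_rfl, hfm]
    simp [f']

lemma walkWeight_nonpos_of_rho_nonpos (hρ : rho A ≤ 0) {k : ℕ} (hk : 0 < k) {f : ℕ → Fin n}
    (hf : f k = f 0) : walkWeight A k f ≤ 0 := by
  by_contra! hpos
  have hmean : 0 < (((k : ℝ)⁻¹ : ℝ) : EReal) * walkWeight A k f :=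
    EReal.mul_pos (by exact_mod_cast inv_pos.2 (Nat.cast_pos.2 hk)) hpos
  have hmean_le : (((k : ℝ)⁻¹ : ℝ) : EReal) * walkWeight A k f ≤ rho A := by
    unfold rho walkWeight
    exact le_iSup₂_of_le k hk (le_iSup₂_of_le f hf le_rfl)
  exact (hmean.trans_le (hmean_le.trans hρ)).false

lemma exists_walk_shortcut (hρ : rho A ≤ 0) {a c : ℕ} (hc : 0 < c) (d : ℕ) {f : ℕ → Fin n}
    (hf : f a = f (a + c)) :
    ∃ g : ℕ → Fin n, g 0 = f 0 ∧ g (a + d) = f (a + c + d) ∧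
      walkWeight A (a + c + d) f ≤ walkWeight A (a + d) g := by
  let g : ℕ → Fin n := fun t => if t ≤ a then f t else f (t + c)
  have hg_le : ∀ t ≤ a, f t = g t := fun t ht => (if_pos ht).symm
  have hg_ge : ∀ t, g (a + t) = f (a + c + t) := by
    rintro (_ | t)
    · simpa [g] using hf
    · simp only [g, if_neg (by omega : ¬a + (t + 1) ≤ a)]
      congr 1
      omega
  have hcycle : walkWeight A c (fun t => f (a + t)) ≤ 0 :=
    walkWeight_nonpos_of_rho_nonpos hρ hc (by simpa using hf.symm)
  refine ⟨g, (hg_le 0 a.zero_le).symm, hg_ge d, ?_⟩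
  calc walkWeight A (a + c + d) f
      = walkWeight A a f + walkWeight A c (fun t => f (a + t))
        + walkWeight A d (fun t => f (a + c + t)) := by rw [walkWeight_add, walkWeight_add]
    _ ≤ walkWeight A a f + 0 + walkWeight A d (fun t => f (a + c + t)) := by gcongr
    _ = walkWeight A (a + d) g := by
      rw [add_zero, walkWeight_add, walkWeight_congr hg_le]
      simp only [hg_ge]

lemma mpPow_le_mpStar (hρ : rho A ≤ 0) (m : ℕ) (i j : Fin n) : mpPow A m i j ≤ mpStar A i j := by
  induction m using Nat.strong_induction_on generalizing i j with
  | _ m ih =>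
  rcases lt_or_ge m n with hm | hm
  · exact le_iSup_of_le ⟨m, hm⟩ le_rfl
  rw [mpPow_eq_iSup_walkWeight]
  refine iSup₂_le fun f ⟨hf0, hfm⟩ => ?_
  obtain ⟨a, c, hc, hac, hfa⟩ : ∃ a c, 0 < c ∧ a + c ≤ n ∧ f a = f (a + c) := by
    obtain ⟨x, y, hxy, hfxy⟩ :=
      Fintype.exists_ne_map_eq_of_card_lt (fun t : Fin (n + 1) => f t) (by simp)
    rcases lt_or_gt_of_ne (Fin.val_ne_of_ne hxy) with h | h
    · exact ⟨x, y - x, by omega, by omega, by rwa [Nat.add_sub_cancel' h.le]⟩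
    · exact ⟨y, x - y, by omega, by omega, by rw [Nat.add_sub_cancel' h.le]; exact hfxy.symm⟩
  obtain ⟨d, rfl⟩ : ∃ d, m = a + c + d := ⟨m - (a + c), by omega⟩
  obtain ⟨g, hg0, hgm, hfg⟩ := exists_walk_shortcut hρ hc d hfa
  calc walkWeight A (a + c + d) f ≤ walkWeight A (a + d) g := hfg
    _ ≤ mpPow A (a + d) i j := by
      simpa [hg0, hgm, hf0, hfm] using walkWeight_le_mpPow (A := A) (a + d) g
    _ ≤ mpStar A i j := ih _ (by omega) i j

lemma add_mpStar_le_mpStar (hρ : rho A ≤ 0) (i j m : Fin n) :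
    A i j + mpStar A j m ≤ mpStar A i m :=
  EReal.add_iSup_le fun k => (add_mpPow_le_mpPow_succ k i j m).trans (mpPow_le_mpStar hρ _ i m)

lemma le_iSup_mpStar_add (w : Fin n → EReal) (i : Fin n) : w i ≤ ⨆ m, mpStar A i m + w m :=
  le_iSup_of_le i (le_add_of_nonneg_left (zero_le_mpStar_self i))

lemma add_iSup_mpStar_add_le (hρ : rho A ≤ 0) (w : Fin n → EReal) (i j : Fin n) :
    A i j + ⨆ m, mpStar A j m + w m ≤ ⨆ m, mpStar A i m + w m :=
  EReal.add_iSup_le fun m =>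
    calc A i j + (mpStar A j m + w m) = (A i j + mpStar A j m) + w m := (add_assoc ..).symm
      _ ≤ mpStar A i m + w m := add_le_add_left (add_mpStar_le_mpStar hρ i j m) _
      _ ≤ ⨆ m, mpStar A i m + w m := le_iSup (fun m => mpStar A i m + w m) m

end MaxPlus

section Optimization

variable {n : ℕ}

noncomputable def objective (p q : Fin n → EReal) (x : Fin n → ℝ) : EReal :=
  (⨆ (i) (_ : p i ≠ ⊥), (p i - (x i : EReal))) ⊔ (⨆ (i) (_ : q i ≠ ⊤), ((x i : EReal) - q i))

def IsFeasible (U : Fin n → Fin n → EReal) (g h : Fin n → EReal) (x : Fin n → ℝ) : Prop :=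
  ∀ i, g i ≤ (x i : EReal) ∧ (x i : EReal) ≤ h i ∧ (⨆ j, U i j + (x j : EReal)) ≤ (x i : EReal)

/-- `a⁻ ⊗ S ⊗ b`, the maximum taken over the finite entries only. -/
noncomputable def mpPairing (S : Fin n → Fin n → EReal) (a b : Fin n → EReal) : EReal :=
  ⨆ (i) (j) (_ : a i ≠ ⊤) (_ : S i j ≠ ⊥) (_ : b j ≠ ⊥), (-(a i) + S i j + b j)

lemma coe_sub_le_objective_of_eq_left {p q : Fin n → EReal} (x : Fin n → ℝ) {j : Fin n} {pj : ℝ}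
    (hpj : p j = pj) : ((pj - x j : ℝ) : EReal) ≤ objective p q x :=
  le_sup_of_le_left <| le_iSup₂_of_le j (by simp [hpj]) (by rw [hpj, EReal.coe_sub])

lemma coe_sub_le_objective_of_eq_right {p q : Fin n → EReal} (x : Fin n → ℝ) {i : Fin n} {qi : ℝ}
    (hqi : q i = qi) : ((x i - qi : ℝ) : EReal) ≤ objective p q x :=
  le_sup_of_le_right <| le_iSup₂_of_le i (by simp [hqi]) (by rw [hqi, EReal.coe_sub])

lemma objective_le_of_le {p q : Fin n → EReal} {x : Fin n → ℝ} {t : ℝ}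
    (hp : ∀ i, p i ≤ x i + t) (hq : ∀ i, (x i : EReal) ≤ q i + t) : objective p q x ≤ t :=
  sup_le (iSup₂_le fun i _ => EReal.sub_le_of_le_add ((hp i).trans_eq (add_comm ..)))
    (iSup₂_le fun i _ => EReal.sub_le_of_le_add ((hq i).trans_eq (add_comm ..)))

variable {S : Fin n → Fin n → EReal} {a b : Fin n → EReal}

lemma coe_le_mpPairing {i j : Fin n} {ai sij bj : ℝ} (ha : a i = ai) (hs : S i j = sij)
    (hb : b j = bj) : ((-ai + sij + bj : ℝ) : EReal) ≤ mpPairing S a b :=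
  le_iSup₂_of_le i j <| le_iSup₂_of_le (by simp [ha]) (by simp [hs]) <|
    le_iSup_of_le (by simp [hb]) (by rw [ha, hs, hb]; norm_cast)

lemma mpPairing_le (ha : ∀ i, a i ≠ ⊥) (hS : ∀ i j, S i j ≠ ⊤) (hb : ∀ j, b j ≠ ⊤) {c : EReal}
    (h : ∀ i j (ai sij bj : ℝ), a i = ai → S i j = sij → b j = bj →
      ((-ai + sij + bj : ℝ) : EReal) ≤ c) :
    mpPairing S a b ≤ c := by
  refine iSup₂_le fun i j => iSup₂_le fun hai hsij => iSup_le fun hbj => ?_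
  lift a i to ℝ using ⟨hai, ha i⟩ with ai hai'
  lift S i j to ℝ using ⟨hS i j, hsij⟩ with sij hsij'
  lift b j to ℝ using ⟨hb j, hbj⟩ with bj hbj'
  exact_mod_cast h i j ai sij bj hai'.symm hsij'.symm hbj'.symm

lemma add_le_add_of_mpPairing_le {i m : Fin n} (ha : a i ≠ ⊥) (hS : S i m ≠ ⊤) (hb : b m ≠ ⊤)
    {r : ℝ} (h : mpPairing S a b ≤ r) : S i m + b m ≤ a i + r := by
  by_cases hat : a i = ⊤
  · simp [hat]
  by_cases hSb : S i m = ⊥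
  · simp [hSb]
  by_cases hbb : b m = ⊥
  · simp [hbb]
  lift a i to ℝ using ⟨hat, ha⟩ with ai hai
  lift S i m to ℝ using ⟨hS, hSb⟩ with sim hsim
  lift b m to ℝ using ⟨hb, hbb⟩ with bm hbm
  have := (coe_le_mpPairing hai.symm hsim.symm hbm.symm).trans h
  norm_cast at this ⊢
  linarith

variable {U : Fin n → Fin n → EReal} {g h p q : Fin n → EReal}

lemma le_objective_of_isFeasible (hU : ∀ i j, U i j ≠ ⊤) (hg : ∀ i, g i ≠ ⊤)
    (hh : ∀ i, h i ≠ ⊥) (hp : ∀ i, p i ≠ ⊤) (hq : ∀ i, q i ≠ ⊥) {x : Fin n → ℝ}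
    (hx : IsFeasible U g h x) :
    (((2 : ℝ)⁻¹ : ℝ) : EReal) * mpPairing (mpStar U) q p ⊔ mpPairing (mpStar U) h p ⊔
      mpPairing (mpStar U) q g ≤ objective p q x := by
  have hS := mpStar_ne_top hU
  have hSx : ∀ i j (sij : ℝ), mpStar U i j = sij → sij + x j ≤ x i := fun i j sij hs => by
    have := mpStar_add_le_of_add_le (fun i => iSup_le_iff.1 (hx i).2.2) i j
    rw [hs] at this
    exact_mod_cast this
  refine sup_le (sup_le ?_ ?_) ?_
  · refine (mul_le_mul_of_nonneg_left ?_ (by norm_num)).trans_eq (EReal.half_mul_add_self _)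
    refine mpPairing_le hq hS hp fun i j qi sij pj hqi hsij hpj => ?_
    calc ((-qi + sij + pj : ℝ) : EReal) ≤ ((x i - qi : ℝ) : EReal) + ((pj - x j : ℝ) : EReal) := by
          norm_cast; linarith [hSx i j sij hsij]
      _ ≤ _ := add_le_add (coe_sub_le_objective_of_eq_right x hqi)
          (coe_sub_le_objective_of_eq_left x hpj)
  · refine mpPairing_le hh hS hp fun i j hi sij pj hhi hsij hpj => ?_
    have hxh : x i ≤ hi := by exact_mod_cast hhi ▸ (hx i).2.1
    refine le_trans ?_ (coe_sub_le_objective_of_eq_left x hpj)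
    norm_cast; linarith [hSx i j sij hsij]
  · refine mpPairing_le hq hS hg fun i j qi sij gj hqi hsij hgj => ?_
    have hgx : gj ≤ x j := by exact_mod_cast hgj ▸ (hx j).1
    refine le_trans ?_ (coe_sub_le_objective_of_eq_right x hqi)
    norm_cast; linarith [hSx i j sij hsij]

lemma exists_isFeasible_objective_le (hU : ∀ i j, U i j ≠ ⊤) (hg : ∀ i, g i ≠ ⊤)
    (hh : ∀ i, h i ≠ ⊥) (hp : ∀ i, p i ≠ ⊤) (hq : ∀ i, q i ≠ ⊥) (hρ : rho U ≤ 0)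
    (hgh : ∀ i, (⨆ j, mpStar U i j + g j) ≤ h i) {t : ℝ}
    (ht : (((2 : ℝ)⁻¹ : ℝ) : EReal) * mpPairing (mpStar U) q p ⊔ mpPairing (mpStar U) h p ⊔
      mpPairing (mpStar U) q g < t) :
    ∃ x, IsFeasible U g h x ∧ objective p q x ≤ t := by
  have hS := mpStar_ne_top hU
  have hqp : mpPairing (mpStar U) q p ≤ ((t + t : ℝ) : EReal) :=
    EReal.coe_add t t ▸
      EReal.le_add_self_of_half_mul_lt ((le_sup_left.trans le_sup_left).trans_lt ht)
  have hhp : mpPairing (mpStar U) h p ≤ t := (le_sup_right.trans le_sup_left).trans ht.le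
  have hqg : mpPairing (mpStar U) q g ≤ t := le_sup_right.trans ht.le
  obtain ⟨r, hr⟩ := EReal.exists_coe_add_le (a := fun k : Fin n × Fin n => mpStar U k.1 k.2)
    (c := fun k => h k.1 ⊓ (q k.1 + t)) (fun k => hS _ _) (fun k => by simp [hh, hq])
  -- `r` only serves to make every coordinate finite.
  let w : Fin n → EReal := fun m => g m ⊔ (p m - t) ⊔ r
  let y : Fin n → EReal := fun i => ⨆ m, mpStar U i m + w m
  have hwy : ∀ i, w i ≤ y i := le_iSup_mpStar_add w
  have hw_top : ∀ m, w m ≠ ⊤ := fun m => by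
    have : p m - t ≠ ⊤ := by
      rw [sub_eq_add_neg, ← EReal.coe_neg]; exact EReal.add_ne_top (hp m) (EReal.coe_ne_top _)
    simp [w, hg m, this]
  have hy_top : ∀ i, y i ≠ ⊤ := fun i => iSup_ne_top fun m => EReal.add_ne_top (hS i m) (hw_top m)
  have hy_bot : ∀ i, y i ≠ ⊥ := fun i =>
    ne_bot_of_le_ne_bot (EReal.coe_ne_bot r) (le_sup_right.trans (hwy i))
  have hyh : ∀ i, y i ≤ h i := fun i => iSup_le fun m => by
    rw [← max_add_add_left, ← max_add_add_left]
    refine sup_le (sup_le ((le_iSup (fun m => mpStar U i m + g m) m).trans (hgh i)) ?_)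
      ((hr (i, m)).trans inf_le_left)
    exact EReal.add_sub_le_of_le_add (add_le_add_of_mpPairing_le (hh i) (hS i m) (hp m) hhp)
  have hyq : ∀ i, y i ≤ q i + t := fun i => iSup_le fun m => by
    rw [← max_add_add_left, ← max_add_add_left]
    refine sup_le (sup_le (add_le_add_of_mpPairing_le (hq i) (hS i m) (hg m) hqg) ?_)
      ((hr (i, m)).trans inf_le_right)
    refine EReal.add_sub_le_of_le_add ?_
    simpa [add_assoc] using add_le_add_of_mpPairing_le (hq i) (hS i m) (hp m) hqp
  let x : Fin n → ℝ := fun i => (y i).toReal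
  have hxy : ∀ i, (x i : EReal) = y i := fun i => EReal.coe_toReal (hy_top i) (hy_bot i)
  refine ⟨x, fun i => ?_, objective_le_of_le (fun i => ?_) fun i => hxy i ▸ hyq i⟩
  · simp only [hxy]
    exact ⟨(le_sup_left.trans le_sup_left).trans (hwy i), hyh i,
      iSup_le fun j => add_iSup_mpStar_add_le hρ w i j⟩
  · calc p i = p i - t + t := EReal.sub_add_cancel.symm
      _ ≤ x i + t := hxy i ▸ add_le_add_left ((le_sup_right.trans le_sup_left).trans (hwy i)) _

end Optimization

/-- Pseudolinear optimization over an alcoved polyhedron: under `ρ(U) ≤ 0` and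
`U* ⊗ g ≤ h`, the infimum of
`f(x) = max( max_{i : p i ∈ ℝ}(p i − x i), max_{i : q i ∈ ℝ}(x i − q i) )`
over `{x ∈ ℝ^n : g ≤ x ≤ h, U ⊗ x ≤ x}` equals
`θ = (q⁻ ⊗ U* ⊗ p)^{⊗1/2} ⊕ h⁻ ⊗ U* ⊗ p ⊕ q⁻ ⊗ U* ⊗ g`
(maxima over indices where all participating entries are finite; empty maxima `−∞`). -/
theorem stmt9 (n : ℕ) (U : Fin n → Fin n → EReal) (g h p q : Fin n → EReal)
    (hU : ∀ i j, U i j ≠ ⊤) (hg : ∀ i, g i ≠ ⊤) (hh : ∀ i, h i ≠ ⊥)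
    (hp : ∀ i, p i ≠ ⊤) (hq : ∀ i, q i ≠ ⊥)
    (hrho : rho U ≤ 0) (hgh : ∀ i, (⨆ j, mpStar U i j + g j) ≤ h i) :
    (⨅ (x : Fin n → ℝ)
        (_ : ∀ i, g i ≤ (x i : EReal) ∧ (x i : EReal) ≤ h i ∧
          (⨆ j, U i j + (x j : EReal)) ≤ (x i : EReal)),
        ((⨆ (i) (_ : p i ≠ ⊥), (p i - (x i : EReal))) ⊔
         (⨆ (i) (_ : q i ≠ ⊤), ((x i : EReal) - q i)))) =
      ((((2 : ℝ)⁻¹ : ℝ) : EReal) *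
        ⨆ (i) (j) (_ : q i ≠ ⊤) (_ : mpStar U i j ≠ ⊥) (_ : p j ≠ ⊥),
          (-(q i) + mpStar U i j + p j)) ⊔
      (⨆ (i) (j) (_ : h i ≠ ⊤) (_ : mpStar U i j ≠ ⊥) (_ : p j ≠ ⊥),
          (-(h i) + mpStar U i j + p j)) ⊔
      (⨆ (i) (j) (_ : q i ≠ ⊤) (_ : mpStar U i j ≠ ⊥) (_ : g j ≠ ⊥),
          (-(q i) + mpStar U i j + g j)) := by
  apply le_antisymm
  · refine EReal.le_of_forall_lt_iff_le.1 fun t ht => ?_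
    obtain ⟨x, hx, hxt⟩ := exists_isFeasible_objective_le hU hg hh hp hq hrho hgh ht
    exact (iInf₂_le x hx).trans hxt
  · exact le_iInf₂ fun x hx => le_objective_of_isFeasible hU hg hh hp hq hx
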